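/- Let m ≥ 1 and let δ ∈ ℝ, δ ≠ 1. For λ₁,…,λₘ ∈ ℝ, the system consisting of the equations λₛ(λₛ+δ-1)·x_{2𝟏ₛ} + Σ_{i≠j} λᵢλⱼ·x_{𝟏ᵢ+𝟏ⱼ} = 0 (imposed for all basis choices as constraints on the rows of an invertible matrix) admits an invertible solution matrix [β]₂ if and only if λ = 0 or λ = (1-δ)𝟏ⱼ for some j. Equivalently: the vector v ∈ ℝ^{C(m+1,2)} with entries v_{2𝟏ₛ} = λₛ(λₛ+δ-1) and v_{𝟏ᵢ+𝟏ⱼ} = λᵢλⱼ (i ≠ j) is zero if and only if λ = 0 or λ = (1-δ)𝟏ⱼ for some j. -/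

import Mathlib

/-! A nonzero `λ` has, by the off-diagonal equations, exactly one nonzero entry `λⱼ`, and the
diagonal equation `λⱼ (λⱼ + δ - 1) = 0` then forces `λⱼ = 1 - δ`. -/

lemma Pi.eq_single_of_pairwise_mul_eq_zero {ι R : Type*} [DecidableEq ι] [MulZeroClass R]
    [NoZeroDivisors R] {lam : ι → R}
    (h : Pairwise fun i j => lam i * lam j = 0) {j : ι} (hj : lam j ≠ 0) :
    lam = Pi.single j (lam j) := by
  funext i
  by_cases hij : i = j
  · subst hij
    simp
  · rw [Pi.single_eq_of_ne hij]
    exact (mul_eq_zero.mp (h hij)).resolve_right hj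

theorem mul_add_eq_zero_and_pairwise_mul_eq_zero_iff {ι R : Type*} [DecidableEq ι] [Ring R]
    [NoZeroDivisors R] (c : R) (lam : ι → R) :
    ((∀ s, lam s * (lam s + c) = 0) ∧ Pairwise fun i j => lam i * lam j = 0) ↔
      lam = 0 ∨ ∃ j, lam = Pi.single j (-c) := by
  constructor
  · rintro ⟨hdiag, hoff⟩
    by_contra! hne
    obtain ⟨j, hj⟩ := Function.ne_iff.mp hne.1
    have hlamj : lam j = -c :=
      eq_neg_of_add_eq_zero_left ((mul_eq_zero.mp (hdiag j)).resolve_left hj)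
    exact hne.2 j (hlamj ▸ Pi.eq_single_of_pairwise_mul_eq_zero hoff hj)
  · rintro (rfl | ⟨j, rfl⟩)
    · simp [Pairwise]
    · refine ⟨fun s => ?_, fun i k hik => ?_⟩
      · rcases eq_or_ne s j with rfl | hsj
        · simp
        · simp [hsj]
      · rcases eq_or_ne i j with rfl | hij
        · simp [Pi.single_eq_of_ne hik.symm]
        · simp [hij]

theorem obstruction_vector_zero_iff_general (m : ℕ) (δ : ℝ)
    (lam : Fin m → ℝ) :
    ((∀ s : Fin m, lam s * (lam s + δ - 1) = 0) ∧
      (∀ i j : Fin m, i ≠ j → lam i * lam j = 0)) ↔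
    ((∀ j, lam j = 0) ∨
      ∃ j : Fin m, ∀ i, lam i = if i = j then 1 - δ else 0) := by
  have key := mul_add_eq_zero_and_pairwise_mul_eq_zero_iff (δ - 1) lam
  simp only [← add_sub_assoc, neg_sub, funext_iff, Pi.zero_apply, Pi.single_apply] at key
  exact key

/-- The obstruction vector with entries `λₛ(λₛ+δ-1)` and `λᵢλⱼ (i ≠ j)` vanishes
iff `λ = 0` or `λ = (1-δ)·𝟏ⱼ` for some `j`. -/
theorem obstruction_vector_zero_iff (m : ℕ) (hm : 1 ≤ m) (δ : ℝ) (hδ : δ ≠ 1)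
    (lam : Fin m → ℝ) :
    ((∀ s : Fin m, lam s * (lam s + δ - 1) = 0) ∧
      (∀ i j : Fin m, i ≠ j → lam i * lam j = 0)) ↔
    ((∀ j, lam j = 0) ∨
      ∃ j : Fin m, ∀ i, lam i = if i = j then 1 - δ else 0) :=
  obstruction_vector_zero_iff_general m δ lam
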